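/- arXiv:2312.16619 — 6 statements merged into one kernel-verified Lean document; each statement's English description precedes it below -/
import Mathlib

section
/- Let q be a prime, n a power of 2 with q ≡ 1 (mod 2n), and let w be a primitive (2n)-th root of unity in Z_q. Then n is invertible in Z_q, and the n×n Vandermonde-type matrix V with entries V_{k,j} = w^{(2k+1)j} (for 0 ≤ k, j ≤ n−1) is invertible over Z_q, with inverse having entries n^{-1} · w^{-(2j+1)k}. -/
/-- Let `q` be a prime, `n` a power of `2` with `q ≡ 1 (mod 2n)`, and `w` a primitive
`(2n)`-th root of unity in `ℤ/q`. Then `n` is invertible in `ℤ/q`, and the `n×n`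
Vandermonde-type matrix `V` with `V_{k,j} = w^{(2k+1)j}` is invertible over `ℤ/q`, with
two-sided inverse having entries `n⁻¹ · w^{−(2j+1)k}` at position `(k,j)`. -/
theorem stmt_2 (q n : ℕ) [Fact q.Prime] (hn : ∃ i : ℕ, n = 2 ^ i)
    (hq : q % (2 * n) = 1) (w : ZMod q) (hw : IsPrimitiveRoot w (2 * n)) :
    IsUnit (n : ZMod q) ∧
    (Matrix.of fun k j : Fin n => w ^ ((2 * (k : ℕ) + 1) * (j : ℕ))) *
      (Matrix.of fun k j : Fin n =>
        (n : ZMod q)⁻¹ * (w ^ ((2 * (j : ℕ) + 1) * (k : ℕ)))⁻¹) = 1 ∧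
    (Matrix.of fun k j : Fin n =>
        (n : ZMod q)⁻¹ * (w ^ ((2 * (j : ℕ) + 1) * (k : ℕ)))⁻¹) *
      (Matrix.of fun k j : Fin n => w ^ ((2 * (k : ℕ) + 1) * (j : ℕ))) = 1 := by
  have hqp : q.Prime := Fact.out
  have hnpos : 0 < n := by obtain ⟨i, rfl⟩ := hn; positivity
  have hq2 : 1 < q := hqp.one_lt
  have hmd := Nat.mod_add_div q (2 * n)
  rw [hq] at hmd
  have hnq : n < q := by
    rcases Nat.eq_zero_or_pos (q / (2 * n)) with h | h
    · rw [h, Nat.mul_zero] at hmd; omega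
    · nlinarith [Nat.le_mul_of_pos_right (2 * n) h]
  have hn0 : (n : ZMod q) ≠ 0 := by
    rw [Ne, ZMod.natCast_eq_zero_iff]
    exact fun h => absurd (Nat.le_of_dvd hnpos h) (by omega)
  have hw0 : w ≠ 0 := hw.ne_zero (by omega)
  have hw1 : w ^ (2 * n) = 1 := hw.pow_eq_one
  have geo : ∀ x : ZMod q, x ^ n = 1 → x ≠ 1 →
      ∑ m ∈ Finset.range n, x ^ m = 0 := by
    intro x h h1
    rw [geom_sum_eq h1, h, sub_self, zero_div]
  refine ⟨isUnit_iff_ne_zero.mpr hn0, ?_, ?_⟩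
  · ext k j
    rw [Matrix.mul_apply]
    simp only [Matrix.of_apply]
    set x : ZMod q := w ^ (2 * (k : ℕ) + 1) * (w ^ (2 * (j : ℕ) + 1))⁻¹ with hx
    have hterm : ∀ m : Fin n,
        w ^ ((2 * (k : ℕ) + 1) * (m : ℕ)) *
          ((n : ZMod q)⁻¹ * (w ^ ((2 * (j : ℕ) + 1) * (m : ℕ)))⁻¹)
          = (n : ZMod q)⁻¹ * x ^ (m : ℕ) := by
      intro m
      rw [hx, mul_pow, inv_pow, pow_mul, pow_mul]
      ring
    rw [Finset.sum_congr rfl (fun m _ => hterm m), ← Finset.mul_sum,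
      Fin.sum_univ_eq_sum_range (fun m => x ^ m) n]
    have hxn : x ^ n = 1 := by
      have hk : (w ^ (2 * (k : ℕ) + 1)) ^ n = w ^ n := by
        rw [← pow_mul, show (2 * (k : ℕ) + 1) * n = 2 * n * (k : ℕ) + n by ring,
          pow_add, pow_mul, hw1, one_pow, one_mul]
      have hj : (w ^ (2 * (j : ℕ) + 1)) ^ n = w ^ n := by
        rw [← pow_mul, show (2 * (j : ℕ) + 1) * n = 2 * n * (j : ℕ) + n by ring,
          pow_add, pow_mul, hw1, one_pow, one_mul]
      rw [hx, mul_pow, inv_pow, hk, hj, mul_inv_cancel₀ (pow_ne_zero _ hw0)]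
    by_cases hkj : k = j
    · subst hkj
      have hx1 : x = 1 := mul_inv_cancel₀ (pow_ne_zero _ hw0)
      rw [Matrix.one_apply_eq, hx1]
      simp only [one_pow, Finset.sum_const, Finset.card_range, nsmul_eq_mul, mul_one]
      exact inv_mul_cancel₀ hn0
    · have hx1 : x ≠ 1 := by
        intro h
        rw [hx, mul_inv_eq_one₀ (pow_ne_zero _ hw0)] at h
        have := hw.pow_inj (by omega) (by omega) h
        exact hkj (Fin.ext (by omega))
      rw [geo x hxn hx1, mul_zero, Matrix.one_apply_ne hkj]
  · ext k j
    rw [Matrix.mul_apply]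
    simp only [Matrix.of_apply]
    set y : ZMod q := w ^ (2 * (j : ℕ)) * (w ^ (2 * (k : ℕ)))⁻¹ with hy
    set c : ZMod q := (n : ZMod q)⁻¹ * (w ^ (k : ℕ))⁻¹ * w ^ (j : ℕ) with hc
    have hterm : ∀ m : Fin n,
        (n : ZMod q)⁻¹ * (w ^ ((2 * (m : ℕ) + 1) * (k : ℕ)))⁻¹ *
          w ^ ((2 * (m : ℕ) + 1) * (j : ℕ)) = c * y ^ (m : ℕ) := by
      intro m
      rw [hy, hc,
        show (2 * (m : ℕ) + 1) * (k : ℕ) = 2 * (k : ℕ) * (m : ℕ) + (k : ℕ) by ring,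
        show (2 * (m : ℕ) + 1) * (j : ℕ) = 2 * (j : ℕ) * (m : ℕ) + (j : ℕ) by ring,
        pow_add, pow_add, pow_mul, pow_mul, mul_pow, inv_pow, mul_inv]
      ring
    rw [Finset.sum_congr rfl (fun m _ => hterm m), ← Finset.mul_sum,
      Fin.sum_univ_eq_sum_range (fun m => y ^ m) n]
    have hyn : y ^ n = 1 := by
      have hj : (w ^ (2 * (j : ℕ))) ^ n = 1 := by
        rw [← pow_mul, show 2 * (j : ℕ) * n = 2 * n * (j : ℕ) by ring, pow_mul, hw1,
          one_pow]
      have hk : (w ^ (2 * (k : ℕ))) ^ n = 1 := by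
        rw [← pow_mul, show 2 * (k : ℕ) * n = 2 * n * (k : ℕ) by ring, pow_mul, hw1,
          one_pow]
      rw [hy, mul_pow, inv_pow, hj, hk, inv_one, mul_one]
    by_cases hkj : k = j
    · subst hkj
      have hy1 : y = 1 := mul_inv_cancel₀ (pow_ne_zero _ hw0)
      rw [Matrix.one_apply_eq, hy1]
      simp only [one_pow, Finset.sum_const, Finset.card_range, nsmul_eq_mul, mul_one]
      rw [hc]
      field_simp
    · have hy1 : y ≠ 1 := by
        intro h
        rw [hy, mul_inv_eq_one₀ (pow_ne_zero _ hw0)] at h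
        have := hw.pow_inj (by omega) (by omega) h
        exact hkj (Fin.ext (by omega))
      rw [geo y hyn hy1, mul_zero, Matrix.one_apply_ne hkj]
end

section
/- Let q be a prime and n a power of 2 with q ≡ 1 (mod 2n), and let l ≥ 1. Fix a nonzero Δ ∈ R_q^l and a coordinate index α ∈ {0,...,n−1}. If b is chosen uniformly at random from R_q^l, then the α-th polynomial coefficient of the inner product b·Δ = ∑_i b_i Δ_i is uniformly distributed in Z_q. -/
open Polynomial

/-- The `i`-th coefficient of an element of `R_q = (ℤ/q)[X]/(Xⁿ+1)`, computed via the
unique representative polynomial of degree `< n`. -/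
noncomputable def rqCoeff (q n : ℕ) (hm : (X ^ n + 1 : (ZMod q)[X]).Monic)
    (x : AdjoinRoot (X ^ n + 1 : (ZMod q)[X])) (i : ℕ) : ZMod q :=
  (AdjoinRoot.modByMonicHom hm x).coeff i

variable {q n : ℕ} [Fact q.Prime]

lemma deg_g (hn1 : 0 < n) : (X ^ n + 1 : (ZMod q)[X]).degree = n := by
  simpa using Polynomial.degree_X_pow_add_C hn1 (1 : ZMod q)

lemma deg_rep_lt (hm : (X ^ n + 1 : (ZMod q)[X]).Monic) (hn1 : 0 < n)
    (y : AdjoinRoot (X ^ n + 1 : (ZMod q)[X])) :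
    (AdjoinRoot.modByMonicHom hm y).degree < n := by
  obtain ⟨p, rfl⟩ := AdjoinRoot.mk_surjective y
  rw [AdjoinRoot.modByMonicHom_mk]
  rw [← deg_g (q := q) hn1]
  exact Polynomial.degree_modByMonic_lt p hm

lemma rep_shift (hm : (X ^ n + 1 : (ZMod q)[X]).Monic) (hn1 : 0 < n)
    (y : AdjoinRoot (X ^ n + 1 : (ZMod q)[X])) :
    AdjoinRoot.modByMonicHom hm (AdjoinRoot.root _ * y) =
      X * (AdjoinRoot.modByMonicHom hm y)
        - C ((AdjoinRoot.modByMonicHom hm y).coeff (n - 1)) * (X ^ n + 1) := by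
  set e := AdjoinRoot.modByMonicHom hm y with he
  set c := e.coeff (n - 1) with hc
  have hy : AdjoinRoot.mk _ e = y := AdjoinRoot.mk_leftInverse hm y
  have hroot : AdjoinRoot.root _ * y = AdjoinRoot.mk _ (X * e) := by
    rw [← hy, ← AdjoinRoot.mk_X, ← map_mul]
  have hdege : e.degree < (n : WithBot ℕ) := deg_rep_lt hm hn1 y
  have hdeg : (X * e - C c * (X ^ n + 1)).degree < (X ^ n + 1 : (ZMod q)[X]).degree := by
    rw [deg_g hn1, Polynomial.degree_lt_iff_coeff_zero]
    intro m hmn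
    have hmn' : n ≤ m := by exact_mod_cast hmn
    rcases eq_or_lt_of_le hmn' with h | h
    · subst h
      obtain ⟨k, rfl⟩ : ∃ k, n = k + 1 := ⟨n - 1, by omega⟩
      simp [coeff_X_mul, hc, Polynomial.coeff_X_pow, coeff_sub,
        Polynomial.coeff_one]
    · have h1 : e.coeff (m - 1) = 0 := by
        apply Polynomial.coeff_eq_zero_of_degree_lt
        exact lt_of_lt_of_le hdege (by exact_mod_cast Nat.le_sub_one_of_lt h)
      have hme : m - 1 + 1 = m := by omega
      rw [← hme]
      simp [coeff_X_mul, h1, Polynomial.coeff_X_pow, coeff_sub,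
        Polynomial.coeff_one, (by omega : ¬ (m - 1 + 1 = 0)), (by omega : ¬ (n = m-1+1)), (by omega : ¬ (m-1+1 = n))]
      intro h2
      exact absurd h2 (by omega)
  rw [hroot, AdjoinRoot.modByMonicHom_mk]
  have hsplit : X * e = C c * (X ^ n + 1) + (X * e - C c * (X ^ n + 1)) := by ring
  conv_lhs => rw [hsplit]
  rw [Polynomial.add_modByMonic, mul_comm (C c), Polynomial.self_mul_modByMonic hm, zero_add]
  exact (Polynomial.modByMonic_eq_self_iff hm).2 (by rw [mul_comm (C c)] at hdeg; exact hdeg)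

lemma rqCoeff_shift (hm : (X ^ n + 1 : (ZMod q)[X]).Monic) (hn1 : 0 < n)
    (y : AdjoinRoot (X ^ n + 1 : (ZMod q)[X])) (i : ℕ) (hi : i + 1 < n) :
    rqCoeff q n hm (AdjoinRoot.root _ * y) (i + 1) = rqCoeff q n hm y i := by
  unfold rqCoeff
  rw [rep_shift hm hn1]
  simp [coeff_X_mul, Polynomial.coeff_X_pow, Polynomial.coeff_one,
    (by omega : ¬ (n = i + 1)), (by omega : ¬ (i + 1 = 0))]
  intro h2
  exact absurd h2 (by omega)

lemma rqCoeff_wrap (hm : (X ^ n + 1 : (ZMod q)[X]).Monic) (hn1 : 0 < n)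
    (y : AdjoinRoot (X ^ n + 1 : (ZMod q)[X])) :
    rqCoeff q n hm (AdjoinRoot.root _ * y) 0 = - rqCoeff q n hm y (n - 1) := by
  unfold rqCoeff
  rw [rep_shift hm hn1]
  simp [Polynomial.coeff_X_pow, Polynomial.coeff_one, (by omega : ¬ (n = 0)),
    Polynomial.mul_coeff_zero]
  rw [if_neg (by omega : ¬ ((0:ℕ) = n)), zero_add, mul_one]

lemma exists_r (hm : (X ^ n + 1 : (ZMod q)[X]).Monic) (hn1 : 0 < n)
    (d : AdjoinRoot (X ^ n + 1 : (ZMod q)[X])) (hd : d ≠ 0) (α : ℕ) (hα : α < n) :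
    ∃ r, rqCoeff q n hm (r * d) α ≠ 0 := by
  by_contra h
  push_neg at h
  set Q : ℕ → Prop := fun j => ∀ r, rqCoeff q n hm (r * d) j = 0 with hQdef
  have step : ∀ i, i + 1 < n → Q (i + 1) → Q i := by
    intro i hi hQ r
    have h2 := hQ (AdjoinRoot.root _ * r)
    rw [mul_assoc, rqCoeff_shift hm hn1 _ i hi] at h2
    exact h2
  have down : ∀ m, m < n → Q m → ∀ j, j ≤ m → Q j := by
    intro m
    induction m with
    | zero => intro _ hQ j hj; rw [Nat.le_zero.mp hj]; exact hQ
    | succ m ih =>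
      intro hmn hQ j hj
      rcases eq_or_lt_of_le hj with h' | h'
      · rw [h']; exact hQ
      · exact ih (by omega) (step m hmn hQ) j (by omega)
  have wrap : Q 0 → Q (n - 1) := by
    intro hQ r
    have h2 := hQ (AdjoinRoot.root _ * r)
    rw [mul_assoc, rqCoeff_wrap hm hn1, neg_eq_zero] at h2
    exact h2
  have hall : ∀ j, j ≤ n - 1 → Q j :=
    down (n - 1) (by omega) (wrap (down α hα (h) 0 (Nat.zero_le _)))
  have he : AdjoinRoot.modByMonicHom hm d = 0 := by
    ext j
    rcases le_or_gt j (n - 1) with hj | hj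
    · have := hall j hj 1
      rwa [one_mul] at this
    · simp only [Polynomial.coeff_zero]
      apply Polynomial.coeff_eq_zero_of_degree_lt
      exact lt_of_lt_of_le (deg_rep_lt hm hn1 d) (by exact_mod_cast (by omega : n ≤ j))
  have := AdjoinRoot.mk_leftInverse hm d
  rw [he, map_zero] at this
  exact hd this.symm

/-- Let `q` be a prime and `n` a power of `2` with `q ≡ 1 (mod 2n)`, and `l ≥ 1`. Fix a
nonzero `Δ ∈ R_q^l` and a coordinate `α ∈ {0,…,n−1}`. If `b` is uniform in `R_q^l`, then
the `α`-th coefficient of `b·Δ = ∑ᵢ bᵢΔᵢ` is uniformly distributed in `ℤ/q`: every fiber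
has exactly a `1/q` fraction of the `b`'s. -/
theorem stmt_3 (q n l : ℕ) [Fact q.Prime] (hn : ∃ i : ℕ, n = 2 ^ i)
    (hq : q % (2 * n) = 1) (hl : 1 ≤ l)
    (hm : (X ^ n + 1 : (ZMod q)[X]).Monic)
    (Δ : Fin l → AdjoinRoot (X ^ n + 1 : (ZMod q)[X])) (hΔ : Δ ≠ 0)
    (α : ℕ) (hα : α < n) :
    ∀ c : ZMod q,
      q * Nat.card {b : Fin l → AdjoinRoot (X ^ n + 1 : (ZMod q)[X]) //
          rqCoeff q n hm (∑ i, b i * Δ i) α = c} =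
        Nat.card (Fin l → AdjoinRoot (X ^ n + 1 : (ZMod q)[X])) := by
  have hn1 : 0 < n := by obtain ⟨i, rfl⟩ := hn; exact Nat.pow_pos (by norm_num)
  haveI : NeZero q := ⟨(Fact.out (p := q.Prime)).pos.ne'⟩
  haveI : Module.Finite (ZMod q) (AdjoinRoot (X ^ n + 1 : (ZMod q)[X])) := Module.Finite.of_basis (AdjoinRoot.powerBasis' hm).basis
  haveI : Finite (AdjoinRoot (X ^ n + 1 : (ZMod q)[X])) := Module.finite_of_finite (ZMod q)
  -- the linear functional
  set φ : (Fin l → AdjoinRoot (X ^ n + 1 : (ZMod q)[X])) →ₗ[ZMod q] ZMod q :=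
    { toFun := fun b => rqCoeff q n hm (∑ i, b i * Δ i) α
      map_add' := by
        intro b b'
        simp only [Pi.add_apply, add_mul, Finset.sum_add_distrib, rqCoeff, map_add, coeff_add]
      map_smul' := by
        intro s b
        simp only [Pi.smul_apply, smul_mul_assoc, ← Finset.smul_sum, rqCoeff, map_smul,
          coeff_smul, smul_eq_mul, RingHom.id_apply] } with hφ
  have hsurj : Function.Surjective φ := by
    obtain ⟨i0, hi0⟩ := Function.ne_iff.mp hΔ
    rw [Pi.zero_apply] at hi0
    obtain ⟨r, hr⟩ := exists_r hm hn1 (Δ i0) hi0 α hα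
    have hval : φ ((Pi.single i0 r : Fin l → AdjoinRoot (X ^ n + 1 : (ZMod q)[X]))) = rqCoeff q n hm (r * Δ i0) α := by
      have : ∑ i, (Pi.single i0 r : Fin l → AdjoinRoot (X ^ n + 1 : (ZMod q)[X])) i * Δ i = r * Δ i0 := by
        rw [Finset.sum_eq_single i0]
        · simp
        · intro j _ hj; simp [Pi.single_apply, hj]
        · simp
      simp only [hφ, LinearMap.coe_mk, AddHom.coe_mk, this]
      exact congrArg (fun x => rqCoeff q n hm x α) this
    intro c
    refine ⟨(c * (φ ((Pi.single i0 r : Fin l → AdjoinRoot (X ^ n + 1 : (ZMod q)[X]))))⁻¹) • (Pi.single i0 r : Fin l → AdjoinRoot (X ^ n + 1 : (ZMod q)[X])), ?_⟩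
    rw [map_smul, smul_eq_mul, mul_assoc, inv_mul_cancel₀ (by rw [hval]; exact hr), mul_one]
  set ψ : (Fin l → AdjoinRoot (X ^ n + 1 : (ZMod q)[X])) →+ ZMod q := φ.toAddMonoidHom with hψ
  have hψsurj : Function.Surjective ψ := hsurj
  have h1 := AddSubgroup.card_eq_card_quotient_mul_card_addSubgroup ψ.ker
  have h2 : Nat.card ((Fin l → AdjoinRoot (X ^ n + 1 : (ZMod q)[X])) ⧸ ψ.ker) = q := by
    rw [Nat.card_congr (QuotientAddGroup.quotientKerEquivOfSurjective ψ hψsurj).toEquiv,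
      Nat.card_zmod]
  intro c
  obtain ⟨b0, hb0⟩ := hψsurj c
  have hfib : Nat.card {b : Fin l → AdjoinRoot (X ^ n + 1 : (ZMod q)[X]) // rqCoeff q n hm (∑ i, b i * Δ i) α = c} =
      Nat.card ψ.ker := by
    apply Nat.card_congr
    refine ⟨fun p => ⟨p.1 - b0, ?_⟩, fun k => ⟨k.1 + b0, ?_⟩, ?_, ?_⟩
    · have hp : ψ p.1 = c := p.2
      rw [AddMonoidHom.mem_ker, map_sub, hp, hb0, sub_self]
    · have hk : ψ k.1 = 0 := k.2
      show ψ (k.1 + b0) = c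
      rw [map_add, hk, hb0, zero_add]
    · intro p; simp
    · intro k; simp
  rw [hfib, h1, h2]
end

section
/- Let P and Q be orthogonal projections on C^d and ρ a density matrix (positive semidefinite with trace 1) satisfying ρQ = ρ. Then tr(Q P ρ P) ≥ (tr(P ρ))^2. -/
open ComplexOrder
open scoped Matrix

lemma psd_trace_nonneg {d : ℕ} {M : Matrix (Fin d) (Fin d) ℂ}
    (h : M.PosSemidef) : 0 ≤ M.trace := by
  rw [Matrix.trace]
  apply Finset.sum_nonneg
  intro i _
  have := h.dotProduct_mulVec_nonneg (Pi.single i 1)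
  simpa [dotProduct, Matrix.mulVec, Pi.single_apply, Finset.sum_ite_eq,
    Matrix.diag] using this

/-- Let `P` and `Q` be orthogonal projections on `ℂ^d` and `ρ` a density matrix
(positive semidefinite with trace `1`) satisfying `ρQ = ρ`. Then
`tr(QPρP) ≥ (tr(Pρ))²`. -/
theorem stmt_4 (d : ℕ) (P Q ρ : Matrix (Fin d) (Fin d) ℂ)
    (hP : P.IsHermitian) (hP2 : P * P = P)
    (hQ : Q.IsHermitian) (hQ2 : Q * Q = Q)
    (hρ : ρ.PosSemidef) (hρtr : ρ.trace = 1)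
    (hρQ : ρ * Q = ρ) :
    (P * ρ).trace ^ 2 ≤ (Q * P * ρ * P).trace := by
  set X := (open MatrixOrder in CFC.sqrt ρ) with hXdef
  have hX : X.PosSemidef := open MatrixOrder in Matrix.nonneg_iff_posSemidef.mp (CFC.sqrt_nonneg ρ)
  have hX2 : X * X = ρ := open MatrixOrder in CFC.sqrt_mul_sqrt_self ρ hρ.nonneg
  have hXH : Xᴴ = X := hX.1
  have hQρ : Q * ρ = ρ := by
    have := congrArg Matrix.conjTranspose hρQ
    simpa [Matrix.conjTranspose_mul, hQ.eq, hρ.1.eq] using this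
  have hXQ : X * Q = X := by
    have key : (X * Q - X)ᴴ * (X * Q - X) = 0 := by
      simp only [Matrix.conjTranspose_sub, Matrix.conjTranspose_mul, hXH, hQ.eq]
      rw [Matrix.sub_mul, Matrix.mul_sub, Matrix.mul_sub]
      have h1 : Q * X * (X * Q) = ρ := by
        rw [mul_assoc, ← mul_assoc X X Q, hX2, hρQ, hQρ]
      have h2 : Q * X * X = ρ := by rw [mul_assoc, hX2, hQρ]
      have h3 : X * (X * Q) = ρ := by rw [← mul_assoc, hX2, hρQ]
      rw [h1, h2, h3, hX2]
      simp
    have := Matrix.conjTranspose_mul_self_eq_zero.mp key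
    have : X * Q = X := by linear_combination (norm := abel) this
    exact this
  have hQX : Q * X = X := by
    have := congrArg Matrix.conjTranspose hXQ
    simpa [Matrix.conjTranspose_mul, hXH, hQ.eq] using this
  set a : ℂ := (P * ρ).trace with ha
  have haX : (X * P * X).trace = a := by
    rw [ha, ← hX2, Matrix.trace_mul_cycle X P X, Matrix.trace_mul_comm (X * X) P]
  set B : Matrix (Fin d) (Fin d) ℂ := Q * P * X with hB
  have hBH : Bᴴ = X * P * Q := by
    simp [hB, Matrix.conjTranspose_mul, hXH, hP.eq, hQ.eq, mul_assoc]
  have hBX : (Bᴴ * X).trace = a := by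
    rw [hBH, mul_assoc, hQX, haX]
  have hXB : (X * B).trace = a := by
    rw [hB, show X * (Q * P * X) = (X * Q) * (P * X) by noncomm_ring, hXQ,
      ← mul_assoc, haX]
  have hBB : (Bᴴ * B).trace = (Q * P * ρ * P).trace := by
    rw [hBH, hB]
    have e1 : X * P * Q * (Q * P * X) = X * (P * (Q * (P * X))) := by
      rw [show X * P * Q * (Q * P * X) = X * P * (Q * Q) * (P * X) by noncomm_ring,
        hQ2]
      try noncomm_ring
    rw [e1, Matrix.trace_mul_comm X (P * (Q * (P * X)))]
    have e2 : P * (Q * (P * X)) * X = P * (Q * P * ρ) := by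
      rw [← hX2]; noncomm_ring
    rw [e2, Matrix.trace_mul_comm P (Q * P * ρ)]
  -- a is real
  have hPpsd : P.PosSemidef := by
    rw [← hP2]
    nth_rewrite 1 [← hP.eq]
    exact Matrix.posSemidef_conjTranspose_mul_self P
  have hXPX : (X * P * X).PosSemidef := by
    have := hPpsd.conjTranspose_mul_mul_same X
    rwa [hXH] at this
  have haconj : (starRingEnd ℂ) a = a := by
    rw [← haX, show (starRingEnd ℂ) (X * P * X).trace = star (X * P * X).trace from rfl,
      ← Matrix.trace_conjTranspose, hXPX.1]
  set M : Matrix (Fin d) (Fin d) ℂ := B - a • X with hM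
  have hpos : 0 ≤ (Mᴴ * M).trace :=
    psd_trace_nonneg (Matrix.posSemidef_conjTranspose_mul_self M)
  have hMH : Mᴴ = Bᴴ - a • X := by
    simp [hM, Matrix.conjTranspose_smul, hXH, haconj]
  have hMM : Mᴴ * M = Bᴴ * B - a • (Bᴴ * X) - a • (X * B) + (a * a) • (X * X) := by
    rw [hMH, hM]
    rw [Matrix.sub_mul, Matrix.mul_sub, Matrix.mul_sub]
    simp only [Matrix.smul_mul, Matrix.mul_smul, smul_smul]
    abel
  have hexp : (Mᴴ * M).trace = (Q * P * ρ * P).trace - a ^ 2 := by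
    rw [hMM]
    simp only [Matrix.trace_add, Matrix.trace_sub, Matrix.trace_smul, hBX, hXB, hBB,
      hX2, hρtr, smul_eq_mul]
    ring
  rw [hexp] at hpos
  exact sub_nonneg.mp hpos
end

section
/- Let q be a prime, t ∈ N with t² ≤ q, and define the rounding function ⌊·⌉_t : Z_q → {0,...,t−1} by partitioning {0,...,q−1} into intervals I_j = {j⌊q/t⌋, ..., j⌊q/t⌋+⌊q/t⌋−1} for j ≤ t−2 and I_{t−1} = {(t−1)⌊q/t⌋,...,q−1}. Then for u, v chosen independently and uniformly at random from Z_q, Pr[⌊u⌉_t = ⌊u+v⌉_t] ≤ 1/t + t/q ≤ 2/t. -/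
/-- The rounding function `⌊·⌉_t : ℤ/q → {0,…,t−1}`: the value `a` with canonical
representative `a.val ∈ {0,…,q−1}` lands in interval
`I_j = {j⌊q/t⌋, …, j⌊q/t⌋+⌊q/t⌋−1}` for `j ≤ t−2`, and `I_{t−1} = {(t−1)⌊q/t⌋,…,q−1}`. -/
def roundT (q t : ℕ) (a : ZMod q) : ℕ := min (a.val / (q / t)) (t - 1)

/-- For a prime `q` and `t ∈ ℕ` with `t² ≤ q`: for `u, v` independent and uniform in
`ℤ/q`, `Pr[⌊u⌉_t = ⌊u+v⌉_t] ≤ 1/t + t/q ≤ 2/t`. -/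
theorem stmt_5 (q t : ℕ) [Fact q.Prime] (ht : 0 < t) (htq : t ^ 2 ≤ q) :
    ((Finset.univ.filter
        (fun uv : ZMod q × ZMod q => roundT q t uv.1 = roundT q t (uv.1 + uv.2))).card : ℝ)
        / (q : ℝ) ^ 2 ≤ 1 / t + t / q ∧
    (1 / t + t / q : ℝ) ≤ 2 / t := by
  have hq : q.Prime := Fact.out
  have hq0 : 0 < q := hq.pos
  have : NeZero q := ⟨hq0.ne'⟩
  have htle : t ≤ q := le_trans (Nat.le_self_pow two_ne_zero t) htq
  set m := q / t with hm
  set r := q % t with hr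
  have hm0 : 0 < m := Nat.div_pos htle ht
  have hqmr : t * m + r = q := Nat.div_add_mod q t
  have hrt : r < t := Nat.mod_lt q ht
  -- count per rounding value
  have hfiber : ∀ c : ℕ,
      (Finset.univ.filter (fun w : ZMod q => roundT q t w = c)).card ≤ m + r := by
    intro c
    have hsub : ∀ w ∈ Finset.univ.filter (fun w : ZMod q => roundT q t w = c),
        w.val ∈ Finset.Ico (c * m) (c * m + (m + r)) := by
      intro w hw
      simp only [Finset.mem_filter, Finset.mem_univ, true_and] at hw
      unfold roundT at hw
      rw [← hm] at hw
      have hvlt : w.val < q := ZMod.val_lt w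
      have hlow : c * m ≤ w.val := by
        have : c ≤ w.val / m := hw ▸ min_le_left _ _
        exact (Nat.le_div_iff_mul_le hm0).mp this
      have hhigh : w.val < c * m + (m + r) := by
        rcases le_or_gt (w.val / m) (t - 1) with h | h
        · have hc : w.val / m = c := by rw [← hw, min_eq_left h]
          have : w.val < (c + 1) * m := (Nat.div_lt_iff_lt_mul hm0).mp (by omega)
          calc w.val < (c + 1) * m := this
            _ ≤ c * m + (m + r) := by ring_nf; omega
        · have hc : c = t - 1 := by rw [← hw, min_eq_right h.le]
          subst hc
          have : t * m = (t - 1) * m + m := by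
            have h1 : t - 1 + 1 = t := Nat.sub_add_cancel ht
            calc t * m = (t - 1 + 1) * m := by rw [h1]
              _ = (t - 1) * m + m := by ring
          omega
      exact Finset.mem_Ico.mpr ⟨hlow, hhigh⟩
    calc (Finset.univ.filter (fun w : ZMod q => roundT q t w = c)).card
        ≤ (Finset.Ico (c * m) (c * m + (m + r))).card :=
          Finset.card_le_card_of_injOn ZMod.val hsub
            (fun a _ b _ h => ZMod.val_injective q h)
      _ = m + r := by rw [Nat.card_Ico]; omega
  -- main counting bound
  have hsum : (Finset.univ.filter
      (fun uv : ZMod q × ZMod q => roundT q t uv.1 = roundT q t (uv.1 + uv.2))).card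
      ≤ q * (m + r) := by
    rw [Finset.card_eq_sum_card_fiberwise (f := Prod.fst) (t := Finset.univ)
      (fun x _ => Finset.mem_univ _)]
    have hfib : ∀ u : ZMod q,
        ((Finset.univ.filter
          (fun uv : ZMod q × ZMod q => roundT q t uv.1 = roundT q t (uv.1 + uv.2))).filter
          (fun uv => uv.1 = u)).card ≤ m + r := by
      intro u
      refine le_trans ?_ (hfiber (roundT q t u))
      apply Finset.card_le_card_of_injOn (fun uv => uv.1 + uv.2)
      · intro a ha
        simp only [Finset.mem_coe, Finset.mem_filter, Finset.mem_univ, true_and] at ha ⊢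
        rw [← ha.1, ha.2]
      · intro a ha b hb h
        simp only [Finset.mem_coe, Finset.mem_filter, Finset.mem_univ, true_and] at ha hb
        have h1 : a.1 = u := ha.2
        have h2 : b.1 = u := hb.2
        have h' : a.1 + a.2 = b.1 + b.2 := h
        rw [h1, h2] at h'
        exact Prod.ext (h1.trans h2.symm) (add_left_cancel h')
    calc ∑ u : ZMod q, ((Finset.univ.filter
          (fun uv : ZMod q × ZMod q => roundT q t uv.1 = roundT q t (uv.1 + uv.2))).filter
          (fun uv => uv.1 = u)).card
        ≤ ∑ _u : ZMod q, (m + r) := Finset.sum_le_sum (fun u _ => hfib u)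
      _ = q * (m + r) := by simp [ZMod.card]
  -- real arithmetic
  have hqR : (0:ℝ) < q := by exact_mod_cast hq0
  have htR : (0:ℝ) < t := by exact_mod_cast ht
  have hmR : (m : ℝ) ≤ (q : ℝ) / t := by
    rw [le_div_iff₀ htR]
    exact_mod_cast Nat.div_mul_le_self q t
  have hrR : (r : ℝ) ≤ t := by exact_mod_cast hrt.le
  constructor
  · have step1 : ((Finset.univ.filter
        (fun uv : ZMod q × ZMod q => roundT q t uv.1 = roundT q t (uv.1 + uv.2))).card : ℝ)
        / (q : ℝ) ^ 2 ≤ ((q : ℝ) * (m + r)) / (q : ℝ) ^ 2 := by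
      apply div_le_div_of_nonneg_right ?_ (by positivity)
      exact_mod_cast hsum
    refine step1.trans ?_
    have heq : ((q : ℝ) * (m + r)) / (q : ℝ) ^ 2 = ((m : ℝ) + r) / q := by
      field_simp
    rw [heq]
    have step2 : ((m : ℝ) + r) / q ≤ ((q : ℝ) / t + t) / q := by
      apply div_le_div_of_nonneg_right (add_le_add hmR hrR) hqR.le
    refine step2.trans (le_of_eq ?_)
    field_simp
  · have hNat : t * t ≤ q := by simpa [pow_two] using htq
    have hRt : (t : ℝ) * t ≤ q := by exact_mod_cast hNat
    have h1 : (t : ℝ) / q ≤ 1 / t := by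
      rw [div_le_div_iff₀ hqR htR]
      nlinarith
    have h2 : (2 : ℝ) / t = 1 / t + 1 / t := by ring
    linarith
end

section
/- With the rounding function ⌊·⌉_t on Z_q as above, the probability over uniform u, v ∈ Z_q that ⌊u⌉_t = ⌊u+v⌉_t equals 1 − ((t−1)⌊q/t⌋/q · (q−⌊q/t⌋)/q + |I_{t−1}|/q · (q−|I_{t−1}|)/q). -/
open Finset

theorem card_filter_apply_eq_apply_add {G β : Type*} [AddGroup G] [Fintype G] [DecidableEq β]
    (f : G → β) :
    #{p : G × G | f p.1 = f (p.1 + p.2)} = #{p : G × G | f p.1 = f p.2} :=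
  card_equiv ((Equiv.refl G).prodShear Equiv.addLeft) (by simp)

theorem card_filter_apply_eq_apply_eq_sum_sq {α β : Type*} [Fintype α] [DecidableEq β]
    (f : α → β) {s : Finset β} (hf : ∀ a, f a ∈ s) :
    #{p : α × α | f p.1 = f p.2} = ∑ b ∈ s, #{a | f a = b} ^ 2 := by
  rw [card_eq_sum_card_fiberwise (f := fun p => f p.1) (t := s) (fun p _ => hf p.1)]
  refine sum_congr rfl fun b _ => ?_
  rw [sq, ← card_product, ← filter_product]
  congr 1
  ext p
  simp only [mem_filter, mem_univ, true_and, mem_product]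
  constructor
  · rintro ⟨h, rfl⟩
    exact ⟨rfl, h.symm⟩
  · rintro ⟨h1, h2⟩
    exact ⟨h1.trans h2.symm, h1⟩

theorem ZMod.card_filter_val (q : ℕ) [NeZero q] (P : ℕ → Prop) [DecidablePred P] :
    #{a : ZMod q | P a.val} = #{n ∈ range q | P n} := by
  refine card_nbij' ZMod.val (fun n => (n : ZMod q)) ?_ ?_ ?_ ?_
  · intro a ha
    simp_all [ZMod.val_lt]
  · intro n hn
    simp_all [Nat.mod_eq_of_lt]
  · intro a _
    simp
  · intro n hn
    simp_all [Nat.mod_eq_of_lt]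

theorem card_filter_min_div_eq_of_lt {q m s j : ℕ} (hm : 0 < m) (hsq : s * m ≤ q) (hj : j < s) :
    #{n ∈ range q | min (n / m) s = j} = m := by
  have hjq : j * m + m ≤ q := by nlinarith
  have hIco : {n ∈ range q | min (n / m) s = j} = Ico (j * m) (j * m + m) := by
    ext n
    have hle := Nat.le_div_iff_mul_le (x := j) (y := n) hm
    have hlt := Nat.div_lt_iff_lt_mul (x := n) (y := j + 1) hm
    rw [add_one_mul] at hlt
    simp only [mem_filter, mem_range, mem_Ico]
    omega
  rw [hIco, Nat.card_Ico]
  omega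

theorem card_filter_min_div_eq_self {q m s : ℕ} (hm : 0 < m) :
    #{n ∈ range q | min (n / m) s = s} = q - s * m := by
  have hIco : {n ∈ range q | min (n / m) s = s} = Ico (s * m) q := by
    ext n
    simp only [mem_filter, mem_range, mem_Ico, min_eq_right_iff, Nat.le_div_iff_mul_le hm]
    tauto
  rw [hIco, Nat.card_Ico]

theorem Nat.sub_one_mul_div_le (q t : ℕ) : (t - 1) * (q / t) ≤ q :=
  (Nat.mul_le_mul_right _ (Nat.sub_le t 1)).trans (Nat.mul_div_le q t)

theorem card_roundT_eq_roundT_add (q t : ℕ) [NeZero q] :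
    #{p : ZMod q × ZMod q | roundT q t p.1 = roundT q t (p.1 + p.2)}
      = (t - 1) * (q / t) * (q / t) + (q - (t - 1) * (q / t)) ^ 2 := by
  rcases (q / t).eq_zero_or_pos with hm | hm
  -- with `q / t = 0` the division in `roundT` is by zero, so `roundT` is identically `0`
  · have hzero : ∀ a : ZMod q, roundT q t a = 0 := by simp [roundT, hm]
    simp [hzero, hm, sq]
  have hmem : ∀ a, roundT q t a ∈ range (t - 1 + 1) := fun a =>
    mem_range.2 (Nat.lt_succ_of_le (min_le_right _ _))
  have fiber (j : ℕ) : #{a : ZMod q | roundT q t a = j}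
      = #{n ∈ range q | min (n / (q / t)) (t - 1) = j} :=
    ZMod.card_filter_val q (fun n => min (n / (q / t)) (t - 1) = j)
  rw [card_filter_apply_eq_apply_add, card_filter_apply_eq_apply_eq_sum_sq _ hmem, sum_range_succ,
    fiber, card_filter_min_div_eq_self hm, sum_congr rfl fun j hj => by
      rw [fiber, card_filter_min_div_eq_of_lt hm (Nat.sub_one_mul_div_le q t) (mem_range.1 hj)],
    sum_const, card_range, smul_eq_mul]
  ring

theorem stmt_6_general (q t : ℕ) [Fact q.Prime] :
    ((Finset.univ.filter
        (fun uv : ZMod q × ZMod q => roundT q t uv.1 = roundT q t (uv.1 + uv.2))).card : ℝ)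
        / (q : ℝ) ^ 2 =
      1 - ((((t : ℝ) - 1) * (q / t : ℕ) / q) * (((q : ℝ) - (q / t : ℕ)) / q) +
        (((q : ℝ) - ((t : ℝ) - 1) * (q / t : ℕ)) / q) *
          (((q : ℝ) - ((q : ℝ) - ((t : ℝ) - 1) * (q / t : ℕ))) / q)) := by
  have hq : (q : ℝ) ≠ 0 := Nat.cast_ne_zero.2 (Fact.out : q.Prime).ne_zero
  have hcast : ((t - 1 : ℕ) : ℝ) * (q / t : ℕ) = ((t : ℝ) - 1) * (q / t : ℕ) := by
    rcases t.eq_zero_or_pos with rfl | ht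
    · simp
    · rw [Nat.cast_sub ht, Nat.cast_one]
  rw [card_roundT_eq_roundT_add, Nat.cast_add, Nat.cast_pow,
    Nat.cast_sub (Nat.sub_one_mul_div_le q t), Nat.cast_mul, Nat.cast_mul, hcast]
  field_simp
  ring

/-- For a prime `q` and `t ≥ 1`, the probability over uniform `u, v ∈ ℤ/q` that
`⌊u⌉_t = ⌊u+v⌉_t` equals
`1 − ((t−1)⌊q/t⌋/q · (q−⌊q/t⌋)/q + |I_{t−1}|/q · (q−|I_{t−1}|)/q)`,
where `|I_{t−1}| = q − (t−1)⌊q/t⌋`. -/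
theorem stmt_6 (q t : ℕ) [Fact q.Prime] (ht : 0 < t) (htq : t ^ 2 ≤ q) :
    ((Finset.univ.filter
        (fun uv : ZMod q × ZMod q => roundT q t uv.1 = roundT q t (uv.1 + uv.2))).card : ℝ)
        / (q : ℝ) ^ 2 =
      1 - ((((t : ℝ) - 1) * (q / t : ℕ) / q) * (((q : ℝ) - (q / t : ℕ)) / q) +
        (((q : ℝ) - ((t : ℝ) - 1) * (q / t : ℕ)) / q) *
          (((q : ℝ) - ((q : ℝ) - ((t : ℝ) - 1) * (q / t : ℕ))) / q)) :=
  stmt_6_general q t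
end

section
/- Let q be a prime and t, c ∈ N with c < ⌊q/t⌋. If Δ ∈ Z_q satisfies |Δ mod± q| ≤ c, then Pr_{u←Z_q}[⌊u⌉_t ≠ ⌊u+Δ⌉_t] ≤ t·|Δ mod± q|/q. -/
lemma count_bad (q t k : ℕ) [NeZero q] (hk : k < q / t) :
    (Finset.univ.filter
      (fun u : ZMod q => roundT q t u ≠ roundT q t (u + (k : ZMod q)))).card ≤ t * k := by
  set m := q / t with hm
  have hm0 : 0 < m := lt_of_le_of_lt (Nat.zero_le k) hk
  have ht1 : 0 < t := by
    by_contra h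
    push_neg at h
    have h0 : t = 0 := by omega
    rw [h0, Nat.div_zero] at hm
    omega
  have hq : 0 < q := Nat.pos_of_ne_zero (NeZero.ne q)
  have hkq : k < q := lt_of_lt_of_le hk (Nat.div_le_self q t)
  set A : Finset ℕ := (Finset.range q).filter (fun v => v / m < t - 1 ∧ m - k ≤ v % m) with hA
  set B : Finset ℕ := Finset.Ico (q - k) q with hB
  have hsub : ((Finset.univ.filter
      (fun u : ZMod q => roundT q t u ≠ roundT q t (u + (k : ZMod q)))).image ZMod.val)
      ⊆ A ∪ B := by
    intro v hv
    simp only [Finset.mem_image, Finset.mem_filter, Finset.mem_univ, true_and] at hv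
    obtain ⟨u, hu, rfl⟩ := hv
    by_cases hBmem : q - k ≤ u.val
    · exact Finset.mem_union_right _ (Finset.mem_Ico.2 ⟨hBmem, ZMod.val_lt u⟩)
    · push_neg at hBmem
      have hvk : u.val + k < q := by omega
      have hval : (u + (k : ZMod q)).val = u.val + k := by
        rw [ZMod.val_add, ZMod.val_natCast, Nat.mod_eq_of_lt hkq, Nat.mod_eq_of_lt hvk]
      refine Finset.mem_union_left _ ?_
      rw [hA, Finset.mem_filter, Finset.mem_range]
      refine ⟨ZMod.val_lt u, ?_, ?_⟩ <;> by_contra hcon <;> push_neg at hcon <;> apply hu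
      · -- hcon : t - 1 ≤ u.val / m
        have h1 : t - 1 ≤ (u.val + k) / m :=
          le_trans hcon (Nat.div_le_div_right (by omega))
        unfold roundT
        rw [hval, ← hm, min_eq_right hcon, min_eq_right h1]
      · -- hcon : u.val % m < m - k
        have h2 : u.val % m + k < m := by omega
        have h3 := Nat.div_add_mod u.val m
        have heq : (u.val + k) / m = u.val / m := by
          rw [show u.val + k = m * (u.val / m) + (u.val % m + k) by omega,
            Nat.mul_add_div hm0, Nat.div_eq_of_lt h2, Nat.add_zero]
        unfold roundT
        rw [hval, ← hm, heq]
  have hcardA : A.card ≤ (t - 1) * k := by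
    have h := Finset.card_le_card_of_injOn (f := fun v => (v / m, v % m - (m - k)))
      (s := A) (t := Finset.range (t-1) ×ˢ Finset.range k) ?_ ?_
    · simpa [Finset.card_product] using h
    · intro v hv
      simp only [hA, Finset.mem_coe, Finset.mem_filter, Finset.mem_range] at hv
      obtain ⟨hv1, hv2, hv3⟩ := hv
      have := Nat.mod_lt v hm0
      simp only [Finset.mem_coe, Finset.mem_product, Finset.mem_range]
      omega
    · intro v hv w hw hvw
      simp only [hA, Finset.mem_coe, Finset.mem_filter, Finset.mem_range] at hv hw
      obtain ⟨-, -, hv3⟩ := hv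
      obtain ⟨-, -, hw3⟩ := hw
      have h1 := Nat.div_add_mod v m
      have h2 := Nat.div_add_mod w m
      simp only [Prod.mk.injEq] at hvw
      obtain ⟨e1, e2⟩ := hvw
      have hmod : v % m = w % m := by omega
      rw [← Nat.div_add_mod v m, ← Nat.div_add_mod w m, e1, hmod]
  calc (Finset.univ.filter
      (fun u : ZMod q => roundT q t u ≠ roundT q t (u + (k : ZMod q)))).card
      = ((Finset.univ.filter
      (fun u : ZMod q => roundT q t u ≠ roundT q t (u + (k : ZMod q)))).image ZMod.val).card := by
        rw [Finset.card_image_of_injective _ (ZMod.val_injective q)]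
    _ ≤ (A ∪ B).card := Finset.card_le_card hsub
    _ ≤ A.card + B.card := Finset.card_union_le _ _
    _ ≤ (t - 1) * k + k := by
        have : B.card = k := by rw [hB, Nat.card_Ico]; omega
        omega
    _ = (t - 1 + 1) * k := (Nat.succ_mul _ _).symm
    _ = t * k := by rw [Nat.sub_add_cancel ht1]

/-- Let `q` be a prime and `t, c ∈ ℕ` with `c < ⌊q/t⌋`. If `Δ ∈ ℤ/q` has centered
representative of absolute value at most `c`, then for uniformly random `u ∈ ℤ/q`,
`Pr[⌊u⌉_t ≠ ⌊u+Δ⌉_t] ≤ t·|Δ mod± q|/q`. -/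
theorem stmt_7 (q t c : ℕ) [Fact q.Prime] (ht : 0 < t) (hc : c < q / t)
    (Δ : ZMod q) (hΔ : Δ.valMinAbs.natAbs ≤ c) :
    ((Finset.univ.filter
        (fun u : ZMod q => roundT q t u ≠ roundT q t (u + Δ))).card : ℝ) / q ≤
      (t : ℝ) * (Δ.valMinAbs.natAbs : ℝ) / q := by
  have hq : 0 < q := (Fact.out : q.Prime).pos
  have : NeZero q := ⟨hq.ne'⟩
  set n := Δ.valMinAbs.natAbs with hn
  have hk : n < q / t := lt_of_le_of_lt hΔ hc
  have key : (Finset.univ.filter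
      (fun u : ZMod q => roundT q t u ≠ roundT q t (u + Δ))).card ≤ t * n := by
    rcases le_or_gt 0 Δ.valMinAbs with hpos | hneg
    · have hΔeq : Δ = (n : ZMod q) := by
        have h1 : ((Δ.valMinAbs : ℤ) : ZMod q) = Δ := Δ.coe_valMinAbs
        have h2 : ((Δ.valMinAbs.natAbs : ℤ) : ZMod q) = Δ := by
          rw [Int.natAbs_of_nonneg hpos]; exact h1
        rw [hn, show ((Δ.valMinAbs.natAbs : ℕ) : ZMod q)
          = ((Δ.valMinAbs.natAbs : ℤ) : ZMod q) from (Int.cast_natCast _).symm, h2]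
      rw [hΔeq]
      exact count_bad q t n hk
    · have hΔeq : -Δ = (n : ZMod q) := by
        have h1 : ((Δ.valMinAbs : ℤ) : ZMod q) = Δ := Δ.coe_valMinAbs
        have h2 : (Δ.valMinAbs : ℤ) = -(n : ℤ) := by rw [hn]; omega
        rw [← h1, h2]
        push_cast
        ring
      have hrw : ∀ w : ZMod q, w + (n : ZMod q) = w - Δ := by
        intro w; rw [← hΔeq]; ring
      have hcard : (Finset.univ.filter
          (fun u : ZMod q => roundT q t u ≠ roundT q t (u + Δ))).card
          = (Finset.univ.filter
          (fun w : ZMod q => roundT q t w ≠ roundT q t (w + (n : ZMod q)))).card := by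
        apply Finset.card_bij (fun u _ => u + Δ)
        · intro u hu
          simp only [Finset.mem_filter, Finset.mem_univ, true_and] at hu ⊢
          rw [hrw, show u + Δ - Δ = u from by ring]
          exact fun h => hu h.symm
        · intro a _ b _ h
          exact add_right_cancel h
        · intro w hw
          simp only [Finset.mem_filter, Finset.mem_univ, true_and] at hw
          refine ⟨w - Δ, ?_, by ring⟩
          simp only [Finset.mem_filter, Finset.mem_univ, true_and]
          rw [hrw] at hw
          rw [show w - Δ + Δ = w from by ring]
          exact fun h => hw h.symm
      rw [hcard]
      exact count_bad q t n hk
  have hq' : (0:ℝ) < q := by exact_mod_cast hq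
  gcongr
  exact_mod_cast key
end
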